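/- If a, b are positive elements of a C*-algebra with ‖a − b‖ < ε, then (a − ε)₊ is Cuntz subequivalent to b. -/

import Mathlib

/-!
Write `δ = ‖a - b‖ < ε`. Then `a - δ ≤ b`, and functional calculus gives a self-adjoint `w` with
`w (a - δ) w = (a - ε)₊`, since `(t - ε)₊ = g(t)² (t - δ)` for a continuous `g`. Hence
`(a - ε)₊ ≤ w b w`. Finally `x ≤ y` with `0 ≤ x` already implies `x ≾ y`: with `r = x^{1/2}` and
`q = (y + t)^{-1/2}` one has `x - (rq) y (rq)* = t (rq)(rq)*`, whose norm is at most `t`.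
-/

variable {A : Type*} [NormedRing A] [StarRing A] [CStarRing A] [CompleteSpace A]
  [NormedAlgebra ℂ A] [StarModule ℂ A] [PartialOrder A] [StarOrderedRing A]
  [ContinuousFunctionalCalculus ℝ A (IsSelfAdjoint : A → Prop)]

/-- Cuntz subequivalence: `x ≾ y` iff there is a sequence `(vₙ)` with `‖vₙ y vₙ* - x‖ → 0`. -/
def CuntzSub (a b : A) : Prop :=
  ∃ v : ℕ → A, Filter.Tendsto (fun n => ‖v n * b * star (v n) - a‖) Filter.atTop (nhds 0)

theorem CuntzSub.of_mul_mul_star {R : Type*} [NormedRing R] [StarRing R] {x y : R} (w : R)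
    (h : CuntzSub x (w * y * star w)) : CuntzSub x y := by
  obtain ⟨v, hv⟩ := h
  refine ⟨fun n => v n * w, ?_⟩
  simpa only [star_mul, mul_assoc] using hv

section CStarAlgebra

variable {B : Type*} [CStarAlgebra B] [PartialOrder B] [StarOrderedRing B]

theorem norm_mul_mul_star_sub_le {x y r q : B} {t : ℝ} (ht : 0 ≤ t) (hr : IsSelfAdjoint r)
    (hq : IsSelfAdjoint q) (hrx : r * r = x) (hxy : x ≤ y)
    (hqy : q * (y + algebraMap ℝ B t) * q = 1) :
    ‖r * q * y * star (r * q) - x‖ ≤ t := by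
  have hstar : star (r * q) = q * r := by rw [star_mul, hq.star_eq, hr.star_eq]
  have hone : 1 = q * y * q + t • (q * q) := by
    rw [← hqy, mul_add, add_mul, Algebra.algebraMap_eq_smul_one, mul_smul_comm, mul_one,
      smul_mul_assoc]
  have hdiff : x - r * q * y * star (r * q) = t • (r * q * star (r * q)) := by
    rw [hstar, ← hrx]
    calc r * r - r * q * y * (q * r) = r * (1 - q * y * q) * r := by noncomm_ring
      _ = t • (r * q * (q * r)) := by
        rw [hone, add_sub_cancel_left, mul_smul_comm, smul_mul_assoc]; simp only [mul_assoc]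
  have hx : 0 ≤ x := hrx ▸ hr.mul_self_nonneg
  have hqxq : ‖q * x * q‖ ≤ 1 := by
    refine (CStarAlgebra.norm_le_one_iff_of_nonneg _ (hq.conjugate_nonneg hx)).mpr ?_
    calc q * x * q ≤ q * (y + algebraMap ℝ B t) * q :=
          hq.conjugate_le_conjugate (hxy.trans (le_add_of_nonneg_right (algebraMap_nonneg B ht)))
      _ = 1 := hqy
  calc ‖r * q * y * star (r * q) - x‖ = t * ‖star (r * q) * (r * q)‖ := by
        rw [norm_sub_rev, hdiff, norm_smul, Real.norm_of_nonneg ht, CStarRing.norm_self_mul_star,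
          CStarRing.norm_star_mul_self]
    _ = t * ‖q * x * q‖ := by rw [hstar, ← hrx]; simp only [mul_assoc]
    _ ≤ t := mul_le_of_le_one_right ht hqxq

open CFC in
theorem CuntzSub.of_le {x y : B} (hx : 0 ≤ x) (hxy : x ≤ y) : CuntzSub x y := by
  let q : ℝ → B := fun t => (y + algebraMap ℝ B t) ^ (-(1 / 2) : ℝ)
  refine ⟨fun n => sqrt x * q (1 / (n + 1)), squeeze_zero (fun _ => norm_nonneg _) (fun n => ?_)
    tendsto_one_div_add_atTop_nhds_zero_nat⟩
  have ht : (0 : ℝ) < 1 / (n + 1) := by positivity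
  exact norm_mul_mul_star_sub_le ht.le (sqrt_nonneg x).isSelfAdjoint rpow_nonneg.isSelfAdjoint
    (sqrt_mul_sqrt_self x) hxy
    (conjugate_rpow_neg_one_half _ (.nonneg_add (hx.trans hxy) (isStrictlyPositive_algebraMap ht)))

end CStarAlgebra

theorem cutoff_div_mul_sub_eq {δ ε : ℝ} (hδε : δ < ε) (t : ℝ) :
    max (t - ε) 0 / max (t - δ) (ε - δ) * (t - δ) = max (t - ε) 0 := by
  rcases le_or_gt t ε with htε | htε
  · simp [max_eq_right (sub_nonpos.2 htε)]
  · rw [max_eq_left (by linarith : ε - δ ≤ t - δ), div_mul_cancel₀ _ (by linarith)]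

theorem exists_isSelfAdjoint_conj_sub_algebraMap_eq_cutoff {R : Type*} [Ring R] [StarRing R]
    [TopologicalSpace R] [Algebra ℝ R] [ContinuousFunctionalCalculus ℝ R IsSelfAdjoint] {a : R}
    (ha : IsSelfAdjoint a) {δ ε : ℝ} (hδε : δ < ε) :
    ∃ w : R, IsSelfAdjoint w ∧
      w * (a - algebraMap ℝ R δ) * w = cfc (fun t : ℝ => max (t - ε) 0) a := by
  have hden : ∀ t : ℝ, 0 < max (t - δ) (ε - δ) := fun t => lt_max_of_lt_right (sub_pos.2 hδε)
  let g : ℝ → ℝ := fun t => √(max (t - ε) 0 / max (t - δ) (ε - δ))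
  have hg : Continuous g :=
    Real.continuous_sqrt.comp (Continuous.div (by fun_prop) (by fun_prop) fun t => (hden t).ne')
  refine ⟨cfc g a, cfc_predicate g a, ?_⟩
  have hsub : a - algebraMap ℝ R δ = cfc (fun t : ℝ => t - δ) a := by
    rw [cfc_sub .., cfc_id' ℝ a, cfc_const δ a]
  rw [hsub, ← cfc_mul .., ← cfc_mul ..]
  refine cfc_congr fun t _ => ?_
  show g t * (t - δ) * g t = _
  rw [mul_right_comm, Real.mul_self_sqrt (div_nonneg (le_max_right _ _) (hden t).le),
    cutoff_div_mul_sub_eq hδε]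

theorem cuntzSub_cutoff_of_close_general (a b : A) (ha : 0 ≤ a) (hb : 0 ≤ b)
    (ε : ℝ) (h : ‖a - b‖ < ε) :
    CuntzSub (cfc (fun t : ℝ => max (t - ε) 0) a) b := by
  let _ : CStarAlgebra A := {}
  have hab : a - algebraMap ℝ A ‖a - b‖ ≤ b :=
    sub_le_comm.mp (ha.isSelfAdjoint.sub hb.isSelfAdjoint).le_algebraMap_norm_self
  obtain ⟨w, hw, hcutoff⟩ := exists_isSelfAdjoint_conj_sub_algebraMap_eq_cutoff ha.isSelfAdjoint h
  refine CuntzSub.of_mul_mul_star w (CuntzSub.of_le (cfc_nonneg fun t _ => le_max_right _ _) ?_)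
  rw [← hcutoff, hw.star_eq]
  exact hw.conjugate_le_conjugate hab

/-- If `‖a - b‖ < ε` then `(a - ε)₊ ≾ b`. -/
theorem cuntzSub_cutoff_of_close (a b : A) (ha : 0 ≤ a) (hb : 0 ≤ b)
    (ε : ℝ) (hε : 0 < ε) (h : ‖a - b‖ < ε) :
    CuntzSub (cfc (fun t : ℝ => max (t - ε) 0) a) b :=
  cuntzSub_cutoff_of_close_general a b ha hb ε h
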